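/- For every initial value u(0) ∈ ln Ω there exists a C¹ map u : [0,∞) → ℝ^N with the given value at t = 0 satisfying the extended α-flow, i.e. u_i'(t) = s_α(r(t))·r_i(t)^α − K̃_i(r(t)) for all t ≥ 0 and all i, where r_i(t) = e^{u_i(t)}. In particular, every maximal solution of the α-flow whose maximal existence time T is finite can be extended to a solution of the extended α-flow defined for all t ∈ [0,∞). -/
import Mathlib


open Real Filter Topology

namespace IDCP

variable {N : ℕ}

/-- The set of edges: 2-element subsets of vertices contained in some face. -/
def edges (Fc : Finset (Finset (Fin N))) : Finset (Finset (Fin N)) :=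
  Fc.biUnion fun f => f.powersetCard 2

/-- `Fc` is the face set of a triangulation of a closed connected surface:
every face has 3 vertices, every edge lies in exactly two faces, and the
1-skeleton is connected. -/
structure IsTriangulation (Fc : Finset (Finset (Fin N))) : Prop where
  card3 : ∀ f ∈ Fc, f.card = 3
  edge2 : ∀ e ∈ edges Fc, (Fc.filter fun f => e ⊆ f).card = 2
  conn : (SimpleGraph.fromRel fun i j => ({i, j} : Finset (Fin N)) ∈ edges Fc).Connected

/-- Euler characteristic χ(M) = N − |E| + |F|. -/
def chi (Fc : Finset (Finset (Fin N))) : ℤ :=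
  (N : ℤ) - ((edges Fc).card : ℤ) + (Fc.card : ℤ)

/-- Edge length l_ij = √(r_i² + r_j² + 2 r_i r_j I_{ij}). -/
noncomputable def len (I : Finset (Fin N) → ℝ) (r : Fin N → ℝ) (i j : Fin N) : ℝ :=
  Real.sqrt (r i ^ 2 + r j ^ 2 + 2 * r i * r j * I {i, j})

/-- The cosine of the inner angle at `i` in triangle `{i,j,k}`. -/
noncomputable def cosAng (I : Finset (Fin N) → ℝ) (r : Fin N → ℝ) (i j k : Fin N) : ℝ :=
  (len I r i j ^ 2 + len I r i k ^ 2 - len I r j k ^ 2) / (2 * len I r i j * len I r i k)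

/-- The auxiliary function Λ. -/
noncomputable def Lam (x : ℝ) : ℝ :=
  if x ≤ -1 then π else if x ≤ 1 then Real.arccos x else 0

/-- Discrete Gaussian curvature K_i = 2π − Σ_{{i,j,k}∈F} θ_i^{jk}.  Every face
containing `i` appears exactly twice (once for each ordering of `j,k`), whence
the factor 1/2. -/
noncomputable def K (Fc : Finset (Finset (Fin N))) (I : Finset (Fin N) → ℝ)
    (r : Fin N → ℝ) (i : Fin N) : ℝ :=
  2 * π - (1 / 2) * ∑ j, ∑ k,
    (if ({i, j, k} : Finset (Fin N)) ∈ Fc then Real.arccos (cosAng I r i j k) else 0)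

/-- Extended curvature K̃_i = 2π − Σ θ̃_i^{jk}, using the generalized angles Λ. -/
noncomputable def Kt (Fc : Finset (Finset (Fin N))) (I : Finset (Fin N) → ℝ)
    (r : Fin N → ℝ) (i : Fin N) : ℝ :=
  2 * π - (1 / 2) * ∑ j, ∑ k,
    (if ({i, j, k} : Finset (Fin N)) ∈ Fc then Lam (cosAng I r i j k) else 0)

/-- The set Ω of inversive distance circle packing metrics. -/
def Omega (Fc : Finset (Finset (Fin N))) (I : Finset (Fin N) → ℝ) : Set (Fin N → ℝ) :=
  {r | (∀ i, 0 < r i) ∧ ∀ i j k : Fin N, ({i, j, k} : Finset (Fin N)) ∈ Fc →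
    len I r j k < len I r i j + len I r i k}

/-- s_α = 2πχ(M)/‖r‖_α^α. -/
noncomputable def sA (Fc : Finset (Finset (Fin N))) (α : ℝ) (r : Fin N → ℝ) : ℝ :=
  2 * π * (chi Fc : ℝ) / ∑ j, r j ^ α

/-- Back from u-coordinates: r_i = e^{u_i}. -/
noncomputable def rOf (u : Fin N → ℝ) : Fin N → ℝ := fun i => Real.exp (u i)

/-- ln Ω, the image of Ω under the coordinate change r ↦ u, u_i = ln r_i. -/
def lnOmega (Fc : Finset (Finset (Fin N))) (I : Finset (Fin N) → ℝ) : Set (Fin N → ℝ) :=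
  {u | rOf u ∈ Omega Fc I}

/-- `u` solves the α-flow du_i/dt = s_α r_i^α − K_i on the time set `D`,
staying in ln Ω. -/
def IsFlowSol (Fc : Finset (Finset (Fin N))) (I : Finset (Fin N) → ℝ) (α : ℝ)
    (D : Set ℝ) (u : ℝ → Fin N → ℝ) : Prop :=
  ∀ t ∈ D, rOf (u t) ∈ Omega Fc I ∧
    ∀ i, HasDerivWithinAt (fun s => u s i)
      (sA Fc α (rOf (u t)) * rOf (u t) i ^ α - K Fc I (rOf (u t)) i) D t

/-- `u` solves the extended α-flow du_i/dt = s_α r_i^α − K̃_i on the time set `D`. -/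
def IsExtFlowSol (Fc : Finset (Finset (Fin N))) (I : Finset (Fin N) → ℝ) (α : ℝ)
    (D : Set ℝ) (u : ℝ → Fin N → ℝ) : Prop :=
  ∀ t ∈ D, ∀ i, HasDerivWithinAt (fun s => u s i)
      (sA Fc α (rOf (u t)) * rOf (u t) i ^ α - Kt Fc I (rOf (u t)) i) D t

/-- Lk(A): pairs (e,v) with both endpoints of e outside A, v ∈ A, and e,v spanning a face. -/
def Lk (Fc : Finset (Finset (Fin N))) (A : Finset (Fin N)) :
    Finset (Finset (Fin N) × Fin N) :=
  ((edges Fc) ×ˢ (Finset.univ : Finset (Fin N))).filter fun p =>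
    (∀ x ∈ p.1, x ∉ A) ∧ p.2 ∈ A ∧ insert p.2 p.1 ∈ Fc

/-- Euler characteristic χ(F_A) of the subcomplex spanned by A. -/
def chiSub (Fc : Finset (Finset (Fin N))) (A : Finset (Fin N)) : ℤ :=
  (A.card : ℤ) - (((edges Fc).filter (fun e => e ⊆ A)).card : ℤ)
    + ((Fc.filter (fun f => f ⊆ A)).card : ℤ)

/-- The lower bound −Σ_{(e,v)∈Lk(A)}(π − Λ(I_e)) + 2πχ(F_A) defining Y_A. -/
noncomputable def Ybound (Fc : Finset (Finset (Fin N))) (I : Finset (Fin N) → ℝ)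
    (A : Finset (Fin N)) : ℝ :=
  -(∑ p ∈ Lk Fc A, (π - Lam (I p.1))) + 2 * π * (chiSub Fc A : ℝ)

/-- x ∈ Y. -/
noncomputable def memY (Fc : Finset (Finset (Fin N))) (I : Finset (Fin N) → ℝ)
    (x : Fin N → ℝ) : Prop :=
  (∑ i, x i) = 2 * π * (chi Fc : ℝ) ∧
    ∀ A : Finset (Fin N), A.Nonempty → A ≠ Finset.univ → Ybound Fc I A < ∑ i ∈ A, x i

/-- x ∈ Ȳ. -/
noncomputable def memYbar (Fc : Finset (Finset (Fin N))) (I : Finset (Fin N) → ℝ)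
    (x : Fin N → ℝ) : Prop :=
  (∑ i, x i) = 2 * π * (chi Fc : ℝ) ∧
    ∀ A : Finset (Fin N), A.Nonempty → A ≠ Finset.univ → Ybound Fc I A ≤ ∑ i ∈ A, x i


section PeanoCore

open MeasureTheory

set_option linter.unusedSectionVars false

variable {E : Type*} [NormedAddCommGroup E] [NormedSpace ℝ E] [ProperSpace E]

noncomputable def appx (f : E → E) (x0 : E) (h : ℝ) : ℕ → ℝ → E
  | 0 => fun _ => x0
  | k+1 => fun t => x0 + ∫ s in (0:ℝ)..(max t 0), f (appx f x0 h k (s - h))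

variable {f : E → E} {x0 : E} {h C : ℝ}

lemma appx_cont (hf : Continuous f) (k : ℕ) : Continuous (appx f x0 h k) := by
  induction k with
  | zero => exact continuous_const
  | succ k ih =>
    have hG : Continuous fun s : ℝ => f (appx f x0 h k (s - h)) :=
      hf.comp (ih.comp (continuous_id.sub continuous_const))
    have hprim : Continuous fun b : ℝ => ∫ s in (0:ℝ)..b, f (appx f x0 h k (s - h)) :=
      intervalIntegral.continuous_primitive (fun a b => hG.intervalIntegrable a b) 0
    exact continuous_const.add (hprim.comp (continuous_id.max continuous_const))

lemma appx_step (hh : 0 < h) (k : ℕ) :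
    ∀ t : ℝ, t ≤ k * h → appx f x0 h (k+1) t = appx f x0 h k t := by
  induction k with
  | zero =>
    intro t ht
    have ht0 : t ≤ 0 := by simpa using ht
    show x0 + ∫ s in (0:ℝ)..(max t 0), f (appx f x0 h 0 (s - h)) = x0
    rw [max_eq_right ht0, intervalIntegral.integral_same, add_zero]
  | succ k ih =>
    intro t ht
    show x0 + _ = x0 + _
    congr 1
    apply intervalIntegral.integral_congr
    intro s hs
    rw [Set.uIcc_of_le (le_max_right t 0)] at hs
    have hkh : (0:ℝ) ≤ ((k:ℝ)+1) * h := by positivity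
    have h1 : max t 0 ≤ ((k:ℝ)+1) * h := by
      apply max_le _ hkh
      push_cast at ht; linarith
    have h2 : s - h ≤ (k:ℝ) * h := by
      have := hs.2.trans h1; linarith
    simp only [ih (s - h) h2]

lemma appx_mono (hh : 0 < h) {k m : ℕ} (hkm : k ≤ m) :
    ∀ t : ℝ, t ≤ k * h → appx f x0 h m t = appx f x0 h k t := by
  induction m with
  | zero => intro t ht; obtain rfl : k = 0 := Nat.le_zero.1 hkm; rfl
  | succ m ih =>
    intro t ht
    rcases eq_or_lt_of_le hkm with rfl | hlt
    · rfl
    · have hkm' : k ≤ m := Nat.lt_succ_iff.1 hlt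
      have h1 : t ≤ (m:ℝ) * h := by
        refine ht.trans ?_
        have : (k:ℝ) ≤ (m:ℝ) := by exact_mod_cast hkm'
        nlinarith
      rw [appx_step hh m t h1, ih hkm' t ht]

noncomputable def appr (f : E → E) (x0 : E) (h : ℝ) (t : ℝ) : E := appx f x0 h ⌈t / h⌉₊ t

lemma le_ceil_mul (hh : 0 < h) (t : ℝ) : t ≤ (⌈t / h⌉₊ : ℝ) * h := by
  rcases le_or_gt t 0 with ht | ht
  · exact ht.trans (by positivity)
  · have h1 : t / h ≤ (⌈t / h⌉₊ : ℝ) := Nat.le_ceil _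
    calc t = t / h * h := (div_mul_cancel₀ t hh.ne').symm
    _ ≤ _ := by nlinarith

lemma appr_eq (hh : 0 < h) {k : ℕ} {t : ℝ} (ht : t ≤ k * h) :
    appr f x0 h t = appx f x0 h k t := by
  rcases le_total (⌈t / h⌉₊) k with hk | hk
  · rw [appr, ← appx_mono hh hk t (le_ceil_mul hh t)]
  · exact appx_mono hh hk t ht

lemma appr_eqn (hh : 0 < h) (t : ℝ) :
    appr f x0 h t = x0 + ∫ s in (0:ℝ)..(max t 0), f (appr f x0 h (s - h)) := by
  set k := ⌈t / h⌉₊ with hk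
  have hkt : t ≤ (k:ℝ) * h := le_ceil_mul hh t
  have h1 : appr f x0 h t = appx f x0 h (k+1) t := by
    apply appr_eq hh (k := k+1)
    refine hkt.trans ?_
    push_cast; nlinarith
  rw [h1]
  show x0 + _ = x0 + _
  congr 1
  apply intervalIntegral.integral_congr
  intro s hs
  rw [Set.uIcc_of_le (le_max_right t 0)] at hs
  have hs2 : s - h ≤ (k:ℝ) * h := by
    have h3 : max t 0 ≤ (k:ℝ) * h := max_le hkt (by positivity)
    have := hs.2.trans h3; linarith
  show f (appx f x0 h k (s - h)) = f (appr f x0 h (s - h))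
  rw [appr_eq hh hs2]

lemma appr_cont (hf : Continuous f) (hh : 0 < h) : Continuous (appr f x0 h) := by
  rw [continuous_iff_continuousAt]
  intro t
  set k := ⌈t / h⌉₊ + 1 with hkdef
  have hkt : t < (k:ℝ) * h := by
    have := le_ceil_mul hh t
    have hcast : ((⌈t / h⌉₊ : ℝ) + 1) * h = (k:ℝ) * h := by push_cast [hkdef]; ring
    nlinarith
  have hev : ∀ᶠ t' in 𝓝 t, appx f x0 h k t' = appr f x0 h t' :=
    Filter.eventually_of_mem (Iio_mem_nhds hkt) fun t' ht' => (appr_eq hh (le_of_lt ht')).symm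
  exact ((appx_cont hf k).continuousAt).congr hev

lemma appr_dist (hf : Continuous f) (hh : 0 < h) (hC : 0 ≤ C) (hb : ∀ y, ‖f y‖ ≤ C)
    (t t' : ℝ) : dist (appr f x0 h t) (appr f x0 h t') ≤ C * |t - t'| := by
  have hG : Continuous fun s : ℝ => f (appr f x0 h (s - h)) :=
    hf.comp ((appr_cont hf hh).comp (continuous_id.sub continuous_const))
  rw [dist_eq_norm, appr_eqn hh t, appr_eqn hh t']
  have heq : (x0 + ∫ s in (0:ℝ)..(max t 0), f (appr f x0 h (s - h)))
      - (x0 + ∫ s in (0:ℝ)..(max t' 0), f (appr f x0 h (s - h)))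
      = ∫ s in (max t' 0)..(max t 0), f (appr f x0 h (s - h)) := by
    rw [show ∀ A B : E, (x0 + A) - (x0 + B) = A - B from fun A B => by abel]
    exact intervalIntegral.integral_interval_sub_left (hG.intervalIntegrable _ _)
      (hG.intervalIntegrable _ _)
  rw [heq]
  refine (intervalIntegral.norm_integral_le_of_norm_le_const fun s _ => hb _).trans ?_
  exact mul_le_mul_of_nonneg_left (abs_max_sub_max_le_abs t t' 0) hC

lemma appr_dist_x0 (hh : 0 < h) (hC : 0 ≤ C) (hb : ∀ y, ‖f y‖ ≤ C) (t : ℝ) :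
    dist (appr f x0 h t) x0 ≤ C * max t 0 := by
  rw [dist_eq_norm, appr_eqn hh t, add_sub_cancel_left]
  refine (intervalIntegral.norm_integral_le_of_norm_le_const fun s _ => hb _).trans ?_
  rw [sub_zero, abs_of_nonneg (le_max_right t 0)]

theorem peano (hf : Continuous f) (hC : 0 ≤ C) (hb : ∀ y, ‖f y‖ ≤ C) (x0 : E) :
    ∃ x : ℝ → E, Continuous x ∧ ∀ t, x t = x0 + ∫ s in (0:ℝ)..(max t 0), f (x s) := by
  classical
  set hh : ℕ → ℝ := fun n => 1 / ((n:ℝ) + 1) with hhdef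
  have hhpos : ∀ n, 0 < hh n := fun n => by positivity
  set Y : ℕ → ℝ → E := fun n => appr f x0 (hh n) with hY
  set U : Ultrafilter ℕ := Ultrafilter.of Filter.atTop with hUdef
  have hU : (U : Filter ℕ) ≤ Filter.atTop := Ultrafilter.of_le _
  have hhto : Filter.Tendsto hh (U : Filter ℕ) (𝓝 0) :=
    tendsto_one_div_add_atTop_nhds_zero_nat.mono_left hU
  have hball : ∀ (t : ℝ) n, Y n t ∈ Metric.closedBall x0 (C * max t 0) := fun t n =>
    Metric.mem_closedBall.2 (appr_dist_x0 (hhpos n) hC hb t)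
  have hconv : ∀ t, ∃ a, Filter.Tendsto (fun n => Y n t) (U : Filter ℕ) (𝓝 a) := by
    intro t
    obtain ⟨a, -, ha⟩ := (isCompact_closedBall x0 (C * max t 0)).ultrafilter_le_nhds
      (U.map fun n => Y n t) (by
        rw [Ultrafilter.coe_map]
        exact Filter.le_principal_iff.2 (Filter.mem_map.2 (Filter.univ_mem' (hball t))))
    exact ⟨a, by rwa [Ultrafilter.coe_map] at ha⟩
  choose x hx using hconv
  have hdist : ∀ t t', dist (x t) (x t') ≤ C * |t - t'| := fun t t' =>
    le_of_tendsto ((hx t).dist (hx t'))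
      (Filter.Eventually.of_forall fun n => appr_dist hf (hhpos n) hC hb t t')
  have hxc : Continuous x := by
    refine (LipschitzWith.of_dist_le_mul (K := C.toNNReal) fun t t' => ?_).continuous
    rw [Real.dist_eq, Real.coe_toNNReal _ hC]
    exact hdist t t'
  have hxb : ∀ t, dist (x t) x0 ≤ C * max t 0 := fun t =>
    le_of_tendsto ((hx t).dist tendsto_const_nhds)
      (Filter.Eventually.of_forall fun n => appr_dist_x0 (hhpos n) hC hb t)
  refine ⟨x, hxc, fun t => ?_⟩
  rcases le_or_gt t 0 with ht | ht
  · rw [max_eq_right ht, intervalIntegral.integral_same, add_zero]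
    have h1 := hxb t
    rw [max_eq_right ht, mul_zero] at h1
    exact dist_le_zero.1 h1
  · have htpos : (0:ℝ) ≤ t := ht.le
    rw [max_eq_left htpos]
    refine tendsto_nhds_unique (hx t) ?_
    rw [Metric.tendsto_nhds]
    intro ε hε
    set ε1 := ε / (2 * (t + 1)) with hε1def
    have hε1pos : 0 < ε1 := by positivity
    obtain ⟨δ, hδpos, hδ⟩ := Metric.uniformContinuousOn_iff.1
      ((isCompact_closedBall x0 (C * t)).uniformContinuousOn_of_continuous hf.continuousOn)
      ε1 hε1pos
    have hSC : ∀ᶠ n in (U : Filter ℕ), ∀ s ∈ Set.Icc (0:ℝ) t,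
        dist (Y n (s - hh n)) (x s) < δ := by
      obtain ⟨δ', hδ'def⟩ : ∃ d, d = δ / (4 * (C + 1)) := ⟨_, rfl⟩
      have hCpos : (0:ℝ) < C + 1 := by linarith
      have hδ'pos : 0 < δ' := by rw [hδ'def]; positivity
      set P : Finset ℝ := (Finset.range (⌈t/δ'⌉₊ + 1)).image (fun i : ℕ => min ((i:ℝ) * δ') t)
        with hPdef
      have ev1 : ∀ᶠ n in (U : Filter ℕ), ∀ p ∈ P, dist (Y n p) (x p) < δ/4 :=
        (Filter.eventually_all_finset P).2 fun p _ =>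
          (Metric.tendsto_nhds.1 (hx p)) _ (by positivity)
      have ev2 : ∀ᶠ n in (U : Filter ℕ), hh n < δ' := by
        filter_upwards [Metric.tendsto_nhds.1 hhto δ' hδ'pos] with n hn
        rw [Real.dist_eq, sub_zero, abs_of_pos (hhpos n)] at hn; exact hn
      filter_upwards [ev1, ev2] with n h1 h2 s hs
      obtain ⟨i, hidef⟩ : ∃ i : ℕ, i = ⌊s / δ'⌋₊ := ⟨_, rfl⟩
      have hsd : 0 ≤ s / δ' := div_nonneg hs.1 hδ'pos.le
      have hip : (i:ℝ) * δ' ≤ s := by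
        have hfl := Nat.floor_le hsd
        rw [hidef]
        calc (⌊s / δ'⌋₊:ℝ) * δ' ≤ (s/δ') * δ' := mul_le_mul_of_nonneg_right hfl hδ'pos.le
        _ = s := div_mul_cancel₀ _ hδ'pos.ne'
      have hsp : s - (i:ℝ) * δ' ≤ δ' := by
        have h3 : s / δ' * δ' < ((⌊s / δ'⌋₊ : ℝ) + 1) * δ' :=
          mul_lt_mul_of_pos_right (Nat.lt_floor_add_one (s / δ')) hδ'pos
        rw [div_mul_cancel₀ _ hδ'pos.ne'] at h3
        rw [hidef]
        linarith [h3]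
      have hpmin : min ((i:ℝ) * δ') t = (i:ℝ) * δ' := min_eq_left (hip.trans hs.2)
      have hpP : (i:ℝ) * δ' ∈ P := by
        rw [hPdef, Finset.mem_image]
        refine ⟨i, Finset.mem_range.2 ?_, hpmin⟩
        have h1' : i ≤ ⌈t/δ'⌉₊ := by
          rw [hidef]
          exact le_trans (Nat.floor_le_floor (by gcongr; exact hs.2)) (Nat.floor_le_ceil _)
        omega
      have hd1 : dist (Y n (s - hh n)) (Y n ((i:ℝ)*δ')) ≤ C * |s - hh n - (i:ℝ)*δ'| :=
        appr_dist hf (hhpos n) hC hb _ _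
      have hd3 : dist (x ((i:ℝ)*δ')) (x s) ≤ C * |(i:ℝ)*δ' - s| := hdist _ _
      have h2' := h1 _ hpP
      have habs1 : |s - hh n - (i:ℝ)*δ'| ≤ 2*δ' := by
        rw [abs_le]
        constructor
        · linarith [hip, h2, hδ'pos, hhpos n]
        · linarith [hsp, hδ'pos, (hhpos n).le]
      have habs2 : |(i:ℝ)*δ' - s| ≤ δ' := by
        rw [abs_le]; constructor <;> linarith
      have hfin : δ' * (4 * (C + 1)) = δ := by
        rw [hδ'def]; field_simp
      calc dist (Y n (s - hh n)) (x s)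
          ≤ dist (Y n (s - hh n)) (Y n ((i:ℝ)*δ')) + dist (Y n ((i:ℝ)*δ')) (x ((i:ℝ)*δ'))
            + dist (x ((i:ℝ)*δ')) (x s) := dist_triangle4 _ _ _ _
        _ ≤ C * (2*δ') + δ/4 + C * δ' :=
          add_le_add (add_le_add (hd1.trans (mul_le_mul_of_nonneg_left habs1 hC)) h2'.le)
            (hd3.trans (mul_le_mul_of_nonneg_left habs2 hC))
        _ < δ := by nlinarith
    filter_upwards [hSC] with n hn
    have hYt : Y n t = x0 + ∫ s in (0:ℝ)..t, f (Y n (s - hh n)) := by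
      have := appr_eqn (f := f) (x0 := x0) (hhpos n) t
      rwa [max_eq_left htpos] at this
    have hint1 : IntervalIntegrable (fun s => f (Y n (s - hh n))) volume 0 t :=
      (hf.comp ((appr_cont hf (hhpos n)).comp
        (continuous_id.sub continuous_const))).intervalIntegrable _ _
    have hint2 : IntervalIntegrable (fun s => f (x s)) volume 0 t :=
      (hf.comp hxc).intervalIntegrable _ _
    have hkey : dist (Y n t) (x0 + ∫ s in (0:ℝ)..t, f (x s)) ≤ ε1 * t := by
      rw [hYt, dist_eq_norm]
      have heq2 : (x0 + ∫ s in (0:ℝ)..t, f (Y n (s - hh n)))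
          - (x0 + ∫ s in (0:ℝ)..t, f (x s))
          = ∫ s in (0:ℝ)..t, (f (Y n (s - hh n)) - f (x s)) := by
        rw [intervalIntegral.integral_sub hint1 hint2]; abel
      rw [heq2]
      have hnb : ∀ s ∈ Set.uIoc (0:ℝ) t, ‖f (Y n (s - hh n)) - f (x s)‖ ≤ ε1 := by
        intro s hs
        rw [Set.uIoc_of_le htpos] at hs
        have hsIcc : s ∈ Set.Icc (0:ℝ) t := ⟨hs.1.le, hs.2⟩
        have hmem1 : Y n (s - hh n) ∈ Metric.closedBall x0 (C*t) := by
          refine Metric.mem_closedBall.2 ((appr_dist_x0 (hhpos n) hC hb _).trans ?_)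
          refine mul_le_mul_of_nonneg_left ?_ hC
          exact max_le (by linarith [(hhpos n).le, hsIcc.2]) htpos
        have hmem2 : x s ∈ Metric.closedBall x0 (C*t) := by
          refine Metric.mem_closedBall.2 ((hxb s).trans ?_)
          exact mul_le_mul_of_nonneg_left (max_le hsIcc.2 htpos) hC
        rw [← dist_eq_norm]
        exact (hδ _ hmem1 _ hmem2 (hn s hsIcc)).le
      calc ‖∫ s in (0:ℝ)..t, (f (Y n (s - hh n)) - f (x s))‖
          ≤ ε1 * |t - 0| := intervalIntegral.norm_integral_le_of_norm_le_const hnb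
        _ = ε1 * t := by rw [sub_zero, abs_of_nonneg htpos]
    calc dist (Y n t) (x0 + ∫ s in (0:ℝ)..t, f (x s)) ≤ ε1 * t := hkey
      _ < ε := by rw [hε1def]; rw [div_mul_eq_mul_div, div_lt_iff₀ (by positivity)]; nlinarith

theorem flow_from_integral (f : E → E) (hf : Continuous f) {x : ℝ → E} (hxc : Continuous x)
    {x0 : E} (heq : ∀ t, 0 ≤ t → x t = x0 + ∫ s in (0:ℝ)..t, f (x s)) :
    ContDiffOn ℝ 1 x (Set.Ici 0) ∧
      ∀ t ∈ Set.Ici (0:ℝ), HasDerivWithinAt x (f (x t)) (Set.Ici 0) t := by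
  have hG : Continuous fun s => f (x s) := hf.comp hxc
  set P : ℝ → E := fun t => x0 + ∫ s in (0:ℝ)..t, f (x s) with hPdef
  have hPd : ∀ t, HasDerivAt P (f (x t)) t := fun t =>
    ((hG.integral_hasStrictDerivAt 0 t).hasDerivAt).const_add x0
  have hPC : ContDiff ℝ 1 P := by
    rw [contDiff_one_iff_deriv]
    refine ⟨fun t => (hPd t).differentiableAt, ?_⟩
    have hd : deriv P = fun t => f (x t) := funext fun t => (hPd t).deriv
    rw [hd]; exact hG
  exact ⟨hPC.contDiffOn.congr fun t ht => heq t ht,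
    fun t ht => ((hPd t).hasDerivWithinAt).congr (fun s hs => heq s hs) (heq t ht)⟩

end PeanoCore

lemma lam_eq (x : ℝ) : Lam x = Real.arccos x := by
  unfold Lam
  rcases le_or_gt x (-1) with h | h
  · rw [if_pos h, Real.arccos, Real.arcsin_of_le_neg_one h]; ring
  · rw [if_neg (not_le.2 h)]
    rcases le_or_gt x 1 with h2 | h2
    · rw [if_pos h2]
    · rw [if_neg (not_le.2 h2), Real.arccos, Real.arcsin_of_one_le h2.le]; ring

lemma Kt_eq_K (Fc : Finset (Finset (Fin N))) (I : Finset (Fin N) → ℝ)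
    (r : Fin N → ℝ) (i : Fin N) : Kt Fc I r i = K Fc I r i := by
  unfold Kt K
  simp only [lam_eq]

/-- The vector field of the extended α-flow in `u`-coordinates. -/
noncomputable def fld (Fc : Finset (Finset (Fin N))) (I : Finset (Fin N) → ℝ) (α : ℝ) :
    (Fin N → ℝ) → (Fin N → ℝ) :=
  fun u i => sA Fc α (rOf u) * rOf u i ^ α - Kt Fc I (rOf u) i

lemma len_cont (I : Finset (Fin N) → ℝ) (i j : Fin N) :
    Continuous fun u : Fin N → ℝ => len I (rOf u) i j := by
  unfold len rOf
  apply Real.continuous_sqrt.comp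
  fun_prop

lemma len_pos {I : Finset (Fin N) → ℝ} {i j : Fin N} (hIe : 0 ≤ I {i, j}) (u : Fin N → ℝ) :
    0 < len I (rOf u) i j := by
  unfold len rOf
  apply Real.sqrt_pos.2
  have h1 : 0 < Real.exp (u i) := Real.exp_pos _
  have h2 : 0 < Real.exp (u j) := Real.exp_pos _
  nlinarith [mul_nonneg (mul_nonneg (by positivity : (0:ℝ) ≤ 2 * Real.exp (u i)) h2.le) hIe]

lemma cosAng_cont {I : Finset (Fin N) → ℝ} {i j k : Fin N}
    (hij : 0 ≤ I {i, j}) (hik : 0 ≤ I {i, k}) :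
    Continuous fun u : Fin N → ℝ => cosAng I (rOf u) i j k := by
  unfold cosAng
  apply Continuous.div
  · exact (((len_cont I i j).pow 2).add ((len_cont I i k).pow 2)).sub ((len_cont I j k).pow 2)
  · exact (continuous_const.mul (len_cont I i j)).mul (len_cont I i k)
  · intro u
    have h1 := len_pos hij u
    have h2 := len_pos hik u
    positivity

lemma mem_edges_of_face {Fc : Finset (Finset (Fin N))} {f : Finset (Fin N)} (hf : f ∈ Fc)
    {a b : Fin N} (hab : a ≠ b) (ha : a ∈ f) (hb : b ∈ f) :
    ({a, b} : Finset (Fin N)) ∈ edges Fc := by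
  apply Finset.mem_biUnion.2
  refine ⟨f, hf, Finset.mem_powersetCard.2 ⟨?_, Finset.card_pair hab⟩⟩
  intro x hx
  rcases Finset.mem_insert.1 hx with rfl | hx
  · exact ha
  · rw [Finset.mem_singleton.1 hx]; exact hb

lemma face_distinct {Fc : Finset (Finset (Fin N))} (hT : IsTriangulation Fc) {i j k : Fin N}
    (hf : ({i, j, k} : Finset (Fin N)) ∈ Fc) : i ≠ j ∧ i ≠ k := by
  have hcard := hT.card3 _ hf
  constructor
  · rintro rfl
    have : ({i, i, k} : Finset (Fin N)).card ≤ 2 := by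
      rw [Finset.insert_idem]
      exact (Finset.card_insert_le _ _).trans (by simp)
    omega
  · rintro rfl
    have : ({i, j, i} : Finset (Fin N)).card ≤ 2 := by
      have : ({i, j, i} : Finset (Fin N)) = {i, j} := by
        ext x; simp; tauto
      rw [this]
      exact Finset.card_insert_le _ _|>.trans (by simp)
    omega

lemma fld_cont (Fc : Finset (Finset (Fin N))) (hT : IsTriangulation Fc)
    (I : Finset (Fin N) → ℝ) (hI : ∀ e ∈ edges Fc, 0 ≤ I e) (α : ℝ) :
    Continuous (fld Fc I α) := by
  have hNE : Nonempty (Fin N) := hT.conn.nonempty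
  rw [continuous_pi_iff]
  intro i
  apply Continuous.sub
  · have hc : ∀ j : Fin N, Continuous fun u : Fin N → ℝ => rOf u j ^ α := fun j =>
      ((Real.continuous_exp.comp (continuous_apply j)).rpow_const
        fun u => Or.inl (Real.exp_ne_zero _))
    apply Continuous.mul _ (hc i)
    unfold sA
    apply Continuous.div continuous_const (continuous_finset_sum _ fun j _ => hc j)
    intro u
    have hpos : (0:ℝ) < ∑ j, rOf u j ^ α :=
      Finset.sum_pos (fun j _ => Real.rpow_pos_of_pos (Real.exp_pos _) α) Finset.univ_nonempty
    exact hpos.ne'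
  · unfold Kt
    apply Continuous.sub continuous_const
    apply Continuous.mul continuous_const
    apply continuous_finset_sum
    intro j _
    apply continuous_finset_sum
    intro k _
    by_cases hjk : ({i, j, k} : Finset (Fin N)) ∈ Fc
    · simp only [hjk, if_true, lam_eq]
      obtain ⟨hij, hik⟩ := face_distinct hT hjk
      have h1 : 0 ≤ I {i, j} := hI _ (mem_edges_of_face hjk hij (by simp) (by simp))
      have h2 : 0 ≤ I {i, k} := hI _ (mem_edges_of_face hjk hik (by simp) (by simp))
      exact Real.continuous_arccos.comp (cosAng_cont h1 h2)
    · simp only [hjk, if_false]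
      exact continuous_const

lemma Kt_bound (Fc : Finset (Finset (Fin N))) (I : Finset (Fin N) → ℝ)
    (r : Fin N → ℝ) (i : Fin N) : |Kt Fc I r i| ≤ 2 * π + (N:ℝ)^2 * π := by
  unfold Kt
  have h1 : ∀ j k : Fin N,
      0 ≤ (if ({i, j, k} : Finset (Fin N)) ∈ Fc then Lam (cosAng I r i j k) else 0) ∧
      (if ({i, j, k} : Finset (Fin N)) ∈ Fc then Lam (cosAng I r i j k) else 0) ≤ π := by
    intro j k
    by_cases h : ({i, j, k} : Finset (Fin N)) ∈ Fc <;>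
      simp [h, lam_eq, Real.arccos_nonneg, Real.arccos_le_pi, Real.pi_pos.le]
  have hS0 : 0 ≤ ∑ j, ∑ k,
      (if ({i, j, k} : Finset (Fin N)) ∈ Fc then Lam (cosAng I r i j k) else 0) :=
    Finset.sum_nonneg fun j _ => Finset.sum_nonneg fun k _ => (h1 j k).1
  have hSB : (∑ j, ∑ k,
      (if ({i, j, k} : Finset (Fin N)) ∈ Fc then Lam (cosAng I r i j k) else 0)) ≤ (N:ℝ)^2 * π := by
    calc (∑ j, ∑ k, (if ({i, j, k} : Finset (Fin N)) ∈ Fc then Lam (cosAng I r i j k) else 0))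
        ≤ ∑ _j : Fin N, ∑ _k : Fin N, π :=
          Finset.sum_le_sum fun j _ => Finset.sum_le_sum fun k _ => (h1 j k).2
      _ = (N:ℝ)^2 * π := by
          simp [Finset.sum_const, Finset.card_univ]; ring
  rw [abs_le]
  constructor <;> nlinarith [Real.pi_pos]

lemma fld_bound (Fc : Finset (Finset (Fin N))) (hT : IsTriangulation Fc)
    (I : Finset (Fin N) → ℝ) (α : ℝ) :
    ∃ C : ℝ, 0 ≤ C ∧ ∀ u : Fin N → ℝ, ‖fld Fc I α u‖ ≤ C := by
  have hNE : Nonempty (Fin N) := hT.conn.nonempty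
  refine ⟨2 * π * |(chi Fc : ℝ)| + (2 * π + (N:ℝ)^2 * π), by positivity, fun u => ?_⟩
  rw [pi_norm_le_iff_of_nonneg (by positivity)]
  intro i
  rw [Real.norm_eq_abs]
  show |sA Fc α (rOf u) * rOf u i ^ α - Kt Fc I (rOf u) i| ≤ _
  have h1 : |sA Fc α (rOf u) * rOf u i ^ α| ≤ 2 * π * |(chi Fc : ℝ)| := by
    unfold sA
    have hpos : ∀ j : Fin N, 0 < rOf u j ^ α := fun j =>
      Real.rpow_pos_of_pos (Real.exp_pos _) α
    have hsum : (0:ℝ) < ∑ j, rOf u j ^ α :=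
      Finset.sum_pos (fun j _ => hpos j) Finset.univ_nonempty
    have hle : rOf u i ^ α ≤ ∑ j, rOf u j ^ α :=
      Finset.single_le_sum (fun j _ => (hpos j).le) (Finset.mem_univ i)
    rw [abs_mul, abs_div, abs_of_pos hsum, abs_of_pos (hpos i), div_mul_eq_mul_div,
      div_le_iff₀ hsum]
    have habs : |2 * π * (chi Fc : ℝ)| = 2 * π * |(chi Fc : ℝ)| := by
      rw [abs_mul, abs_of_pos (by positivity : (0:ℝ) < 2 * π)]
    rw [habs]
    have : (0:ℝ) ≤ 2 * π * |(chi Fc : ℝ)| := by positivity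
    nlinarith [hpos i]
  have h2 := Kt_bound Fc I (rOf u) i
  calc |sA Fc α (rOf u) * rOf u i ^ α - Kt Fc I (rOf u) i|
      = |sA Fc α (rOf u) * rOf u i ^ α + -(Kt Fc I (rOf u) i)| := by rw [sub_eq_add_neg]
    _ ≤ |sA Fc α (rOf u) * rOf u i ^ α| + |-(Kt Fc I (rOf u) i)| := abs_add_le _ _
    _ = |sA Fc α (rOf u) * rOf u i ^ α| + |Kt Fc I (rOf u) i| := by rw [abs_neg]
    _ ≤ _ := add_le_add h1 h2

lemma proj_deriv {x : ℝ → Fin N → ℝ} {d : Fin N → ℝ} {s : Set ℝ} {t : ℝ}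
    (h : HasDerivWithinAt x d s t) (i : Fin N) :
    HasDerivWithinAt (fun s' => x s' i) (d i) s t :=
  (ContinuousLinearMap.proj (R := ℝ) (φ := fun _ : Fin N => ℝ) i).hasFDerivAt.comp_hasDerivWithinAt
    t h

lemma exists_extFlow (Fc : Finset (Finset (Fin N))) (hT : IsTriangulation Fc)
    (I : Finset (Fin N) → ℝ) (hI : ∀ e ∈ edges Fc, 0 ≤ I e) (α : ℝ) (u0 : Fin N → ℝ) :
    ∃ u : ℝ → Fin N → ℝ, u 0 = u0 ∧ ContDiffOn ℝ 1 u (Set.Ici 0) ∧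
      IsExtFlowSol Fc I α (Set.Ici 0) u := by
  obtain ⟨C, hC, hb⟩ := fld_bound Fc hT I α
  have hfc := fld_cont Fc hT I hI α
  obtain ⟨x, hxc, hxeq⟩ := peano hfc hC hb u0
  have hx0 : x 0 = u0 := by
    have := hxeq 0
    simpa using this
  have heq : ∀ t, 0 ≤ t → x t = u0 + ∫ s in (0:ℝ)..t, fld Fc I α (x s) := fun t ht => by
    rw [hxeq t, max_eq_left ht]
  obtain ⟨hcd, hder⟩ := flow_from_integral _ hfc hxc heq
  refine ⟨x, hx0, hcd, fun t ht i => ?_⟩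
  exact proj_deriv (hder t ht) i


/-- for every initial value u(0) ∈ ln Ω the extended α-flow has a
C¹ solution defined for all t ∈ [0,∞); in particular any solution of the
α-flow defined on a finite maximal interval [0,T) extends to a solution of
the extended α-flow on [0,∞). -/


theorem stmt6 {N : ℕ} (Fc : Finset (Finset (Fin N))) (hT : IsTriangulation Fc)
    (I : Finset (Fin N) → ℝ) (hI : ∀ e ∈ edges Fc, 0 ≤ I e) (α : ℝ) :
    (∀ u0 : Fin N → ℝ, u0 ∈ lnOmega Fc I →
      ∃ u : ℝ → Fin N → ℝ, u 0 = u0 ∧ ContDiffOn ℝ 1 u (Set.Ici 0) ∧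
        IsExtFlowSol Fc I α (Set.Ici 0) u) ∧
    (∀ T : ℝ, 0 < T → ∀ u : ℝ → Fin N → ℝ, IsFlowSol Fc I α (Set.Ico 0 T) u →
      ∃ v : ℝ → Fin N → ℝ, (∀ t ∈ Set.Ico 0 T, v t = u t) ∧
        ContDiffOn ℝ 1 v (Set.Ici 0) ∧ IsExtFlowSol Fc I α (Set.Ici 0) v) := by
  constructor
  · intro u0 _
    exact exists_extFlow Fc hT I hI α u0
  · intro T hT0 u hu
    obtain ⟨C, hC, hb⟩ := fld_bound Fc hT I α
    have hfc := fld_cont Fc hT I hI α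
    have hder : ∀ t ∈ Set.Ico (0:ℝ) T, HasDerivWithinAt u (fld Fc I α (u t)) (Set.Ico 0 T) t := by
      intro t ht
      apply hasDerivWithinAt_pi.2
      intro i
      show HasDerivWithinAt (fun s => u s i)
        (sA Fc α (rOf (u t)) * rOf (u t) i ^ α - Kt Fc I (rOf (u t)) i) (Set.Ico 0 T) t
      rw [Kt_eq_K]
      exact (hu t ht).2 i
    have hcont_u : ContinuousOn u (Set.Ico 0 T) := fun s hs => (hder s hs).continuousWithinAt
    have hlip : LipschitzOnWith C.toNNReal u (Set.Ico 0 T) := by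
      apply (convex_Ico (0:ℝ) T).lipschitzOnWith_of_nnnorm_hasDerivWithin_le hder
      intro t ht
      have h1 : (‖fld Fc I α (u t)‖₊ : ℝ) ≤ C := by
        rw [coe_nnnorm]; exact hb _
      exact (Real.le_toNNReal_iff_coe_le hC).2 h1
    obtain ⟨ut, hutlip, hagree⟩ := hlip.extend_pi
    obtain ⟨x, hxc, hxeq⟩ := peano hfc hC hb (ut T)
    have hx0 : x 0 = ut T := by simpa using hxeq 0
    set w : ℝ → Fin N → ℝ := fun t => if t < T then ut t else x (t - T) with hwdef
    have hwx : ∀ t, T ≤ t → w t = x (t - T) := fun t ht => if_neg (not_lt.2 ht)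
    have hwu : ∀ s, s < T → w s = ut s := fun s hs => if_pos hs
    have hw0 : ∀ s, s ≤ T → w s = ut s := by
      intro s hs
      rcases lt_or_eq_of_le hs with h | rfl
      · exact hwu s h
      · rw [hwx s le_rfl, sub_self, hx0]
    have huw : ∀ s ∈ Set.Ico (0:ℝ) T, w s = u s := fun s hs => by
      rw [hw0 s hs.2.le]; exact (hagree hs).symm
    have hwcont : Continuous w := by
      have h1 : Continuous fun t : ℝ => if T ≤ t then x (t - T) else ut t := by
        apply Continuous.if_le (hxc.comp (continuous_id.sub continuous_const))
          hutlip.continuous continuous_const continuous_id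
        intro t ht
        have ht' : t = T := ht.symm
        subst ht'
        simp [Function.comp, hx0]
      have h2 : w = fun t : ℝ => if T ≤ t then x (t - T) else ut t := by
        funext t
        rcases lt_or_ge t T with h | h
        · rw [hwu t h, if_neg (not_le.2 h)]
        · rw [hwx t h, if_pos h]
      rw [h2]; exact h1
    have hG : Continuous fun s => fld Fc I α (w s) := hfc.comp hwcont
    have hIcoEq : ∀ t ∈ Set.Ico (0:ℝ) T, w t = w 0 + ∫ s in (0:ℝ)..t, fld Fc I α (w s) := by
      intro t ht
      have hsub : Set.Icc (0:ℝ) t ⊆ Set.Ico 0 T := fun s hs => ⟨hs.1, lt_of_le_of_lt hs.2 ht.2⟩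
      have hcu : ContinuousOn u (Set.Icc 0 t) := hcont_u.mono hsub
      have h2 : ∫ s in (0:ℝ)..t, fld Fc I α (u s) = u t - u 0 := by
        apply intervalIntegral.integral_eq_sub_of_hasDeriv_right_of_le ht.1 hcu
        · intro s hs
          have hsmem : s ∈ Set.Ico (0:ℝ) T := ⟨hs.1.le, hs.2.trans ht.2⟩
          have hnhds : Set.Ico (0:ℝ) T ∈ nhds s :=
            Filter.mem_of_superset (isOpen_Ioo.mem_nhds ⟨hs.1, hs.2.trans ht.2⟩) Set.Ioo_subset_Ico_self
          exact ((hder s hsmem).hasDerivAt hnhds).hasDerivWithinAt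
        · apply ContinuousOn.intervalIntegrable
          rw [Set.uIcc_of_le ht.1]
          exact hfc.comp_continuousOn hcu
      have h3 : ∫ s in (0:ℝ)..t, fld Fc I α (w s) = ∫ s in (0:ℝ)..t, fld Fc I α (u s) := by
        apply intervalIntegral.integral_congr
        intro s hs
        rw [Set.uIcc_of_le ht.1] at hs
        simp only []
        rw [huw s (hsub hs)]
      rw [h3, h2, huw 0 ⟨le_rfl, hT0⟩, huw t ht]
      abel
    have hTEq : w T = w 0 + ∫ s in (0:ℝ)..T, fld Fc I α (w s) := by
      have hclosed : IsClosed {t : ℝ | w t = w 0 + ∫ s in (0:ℝ)..t, fld Fc I α (w s)} :=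
        isClosed_eq hwcont (continuous_const.add
          (intervalIntegral.continuous_primitive (fun a b => hG.intervalIntegrable a b) 0))
      have hsub : closure (Set.Ico (0:ℝ) T) ⊆ {t : ℝ | w t = w 0 + ∫ s in (0:ℝ)..t, fld Fc I α (w s)} :=
        closure_minimal hIcoEq hclosed
      apply hsub
      rw [closure_Ico (ne_of_lt hT0)]
      exact ⟨hT0.le, le_rfl⟩
    have hmain : ∀ t, 0 ≤ t → w t = w 0 + ∫ s in (0:ℝ)..t, fld Fc I α (w s) := by
      intro t ht
      rcases lt_or_ge t T with h1 | h1
      · exact hIcoEq t ⟨ht, h1⟩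
      · have hx' : x (t - T) = ut T + ∫ s in (0:ℝ)..(t - T), fld Fc I α (x s) := by
          rw [hxeq (t - T), max_eq_left (by linarith)]
        have hshift : ∫ s in T..t, fld Fc I α (w s) = ∫ s in (0:ℝ)..(t - T), fld Fc I α (x s) := by
          have hcv := intervalIntegral.integral_comp_sub_right
            (a := T) (b := t) (fun s => fld Fc I α (x s)) T
          rw [sub_self] at hcv
          rw [← hcv]
          apply intervalIntegral.integral_congr
          intro s hs
          rw [Set.uIcc_of_le h1] at hs
          simp only []
          rw [hwx s hs.1]
        have hadd : (∫ s in (0:ℝ)..T, fld Fc I α (w s)) + ∫ s in T..t, fld Fc I α (w s)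
            = ∫ s in (0:ℝ)..t, fld Fc I α (w s) :=
          intervalIntegral.integral_add_adjacent_intervals (hG.intervalIntegrable _ _)
            (hG.intervalIntegrable _ _)
        have hutT : ut T = w T := (hw0 T le_rfl).symm
        rw [hwx t h1, hx', hutT, hTEq, hshift.symm, ← hadd]
        abel
    obtain ⟨hcd, hderw⟩ := flow_from_integral _ hfc hwcont hmain
    refine ⟨w, huw, hcd, fun t ht i => ?_⟩
    exact proj_deriv (hderw t ht) i


end IDCP
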